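/- Let K ≥ 1 be an integer, 0 < μ < 1, λ > 1, and ε₁, ε₂ ≥ 0. Let φ : ℝ → ℝ be a Schwartz function and let ρ : ℝ → [0,∞) be an even, integrable function, monotonically nonincreasing on [0,∞), with |φ(t)| ≤ ρ(t) for all t. Assume: (i) for every x ∈ B₁(ℝ,μ) there exists a sequence q ∈ A_K^ℤ with sup_{t∈ℝ} |x(t) − (1/λ)·∑_{n∈ℤ} q_n φ(t − n/λ)| ≤ ε₁; and (ii) T ≥ 1/λ satisfies ∫_{T − 1/λ}^{∞} ρ(s) ds ≤ ε₂. Let a > 0, I = [−a, a], and Ĩ = [−a − T, a + T]. Then for every x ∈ B₁(ℝ,μ) there exists a finitely supported choice of quantized values q ∈ A_K^{ℤ ∩ λĨ} such that sup_{t∈I} |x(t) − (1/λ)·∑_{n ∈ ℤ ∩ λĨ} q_n φ(t − n/λ)| ≤ ε₁ + 2ε₂. In particular, the set of truncated reconstructions {(1/λ)·∑_{n ∈ ℤ ∩ λĨ} q_n φ(· − n/λ) : q ∈ A_K^{ℤ ∩ λĨ}}, which has at most 2^{K·#(ℤ ∩ λĨ)} elements, is an (ε₁ + 2ε₂)-net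 of B₁(ℝ,μ) restricted to I in the supremum norm on I. -/

import Mathlib

open MeasureTheory FourierTransform

/-- `x ∈ B₁(ℝ, μ)`: `x` is continuous, bounded in absolute value by `μ`, and its Fourier
transform in the sense of tempered distributions is supported in `[-1/2, 1/2]`. -/
def IsBandlimited (μ : ℝ) (x : ℝ → ℝ) : Prop :=
  Continuous x ∧ (∀ t, |x t| ≤ μ) ∧
  ∀ ψ : ℝ → ℂ, ContDiff ℝ (⊤ : ℕ∞) ψ → HasCompactSupport ψ →
    Disjoint (tsupport ψ) (Set.Icc (-(1 : ℝ)/2) (1/2)) →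
    ∫ t : ℝ, (x t : ℂ) * (𝓕 ψ) t = 0

/-- The `K`-bit alphabet: the `2^K` evenly spaced points in `[-1, 1]` including both
endpoints. -/
def alphabet (K : ℕ) : Set ℝ :=
  {q | ∃ i : Fin (2 ^ K), q = -1 + 2 * (i : ℝ) / (2 ^ K - 1)}

/-- `ℤ ∩ λĨ` for `Ĩ = [-(a+T), a+T]`: the set of integers `n` with `n/λ ∈ Ĩ`. -/
def padSet (lam a T : ℝ) : Set ℤ :=
  {n : ℤ | (n : ℝ) / lam ∈ Set.Icc (-(a + T)) (a + T)}

/-- The set of truncated reconstructions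
`{(1/λ)·∑_{n ∈ ℤ ∩ λĨ} q_n φ(· − n/λ) : q ∈ A_K^{ℤ ∩ λĨ}}`. -/
def truncRecons (K : ℕ) (φ : ℝ → ℝ) (lam a T : ℝ) : Set (ℝ → ℝ) :=
  {f | ∃ q : ℤ → ℝ, (∀ n ∈ padSet lam a T, q n ∈ alphabet K) ∧
    (∀ n ∉ padSet lam a T, q n = 0) ∧
    f = fun t => (1 / lam) * ∑' n : padSet lam a T, q n * φ (t - (n : ℤ) / lam)}

open MeasureTheory

private lemma alphabet_abs_le' {K : ℕ} (hK : 1 ≤ K) {q : ℝ}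
    (hq : q ∈ alphabet K) : |q| ≤ 1 := by
  obtain ⟨i, rfl⟩ := hq
  have h2 : (2:ℝ) ≤ 2 ^ K := by
    calc (2:ℝ) = 2 ^ 1 := (pow_one 2).symm
    _ ≤ 2 ^ K := by
      apply pow_le_pow_right₀ one_le_two hK
  have hden : (0:ℝ) < 2 ^ K - 1 := by linarith
  have hi : (i : ℝ) ≤ 2 ^ K - 1 := by
    have : ((i : ℕ) : ℝ) + 1 ≤ ((2 ^ K : ℕ) : ℝ) := by
      exact_mod_cast Nat.succ_le_of_lt i.isLt
    push_cast at this
    linarith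
  have hi0 : (0:ℝ) ≤ (i : ℝ) := Nat.cast_nonneg _
  rw [abs_le]
  constructor
  · have : 0 ≤ 2 * (i : ℝ) / (2 ^ K - 1) := by positivity
    linarith
  · have : 2 * (i : ℝ) / (2 ^ K - 1) ≤ 2 := by
      rw [div_le_iff₀ hden]; linarith
    linarith

private lemma oneSide {lam T : ℝ} {ρ : ℝ → ℝ} (hlam : 0 < lam)
    (hρ0 : ∀ s, 0 ≤ ρ s) (hρint : Integrable ρ)
    (hρmono : AntitoneOn ρ (Set.Ici 0)) (hT : 1 / lam ≤ T)
    (t : ℝ) (F : Finset ℤ) (hF : ∀ n ∈ F, T ≤ (n : ℝ) / lam - t) :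
    ∑ n ∈ F, (1 / lam) * ρ ((n : ℝ) / lam - t) ≤ ∫ s in Set.Ioi (T - 1 / lam), ρ s := by
  have hlaminv : (0:ℝ) < 1 / lam := by positivity
  have hT0 : (0:ℝ) ≤ T - 1 / lam := by linarith
  set I : ℤ → Set ℝ := fun n => Set.Ioc ((n : ℝ) / lam - t - 1 / lam) ((n : ℝ) / lam - t) with hI
  have hIsub : ∀ n ∈ F, I n ⊆ Set.Ioi (T - 1 / lam) := by
    intro n hn s hs
    have := hF n hn
    have h1 : T - 1/lam ≤ (n : ℝ) / lam - t - 1/lam := by linarith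
    exact lt_of_le_of_lt h1 hs.1
  have step1 : ∀ n ∈ F, (1 / lam) * ρ ((n : ℝ) / lam - t) ≤ ∫ s in I n, ρ s := by
    intro n hn
    have hconst : ∫ s in I n, ρ ((n : ℝ) / lam - t) = (1 / lam) * ρ ((n : ℝ) / lam - t) := by
      rw [setIntegral_const, Real.volume_real_Ioc, smul_eq_mul]
      congr 1
      rw [show ((n : ℝ) / lam - t - ((n : ℝ) / lam - t - 1/lam)) = 1/lam by ring,
        max_eq_left hlaminv.le]
    rw [← hconst]
    apply setIntegral_mono_on
    · exact integrableOn_const (by rw [Real.volume_Ioc]; exact ENNReal.ofReal_ne_top)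
    · exact hρint.integrableOn
    · exact measurableSet_Ioc
    · intro s hs
      have hsI : s ∈ Set.Ioi (T - 1/lam) := hIsub n hn hs
      exact hρmono (by simp only [Set.mem_Ici]; linarith [hsI.out])
        (by simp only [Set.mem_Ici]; linarith [hF n hn]) hs.2
  calc ∑ n ∈ F, (1 / lam) * ρ ((n : ℝ) / lam - t)
      ≤ ∑ n ∈ F, ∫ s in I n, ρ s := Finset.sum_le_sum step1
    _ = ∫ s in ⋃ n ∈ F, I n, ρ s := by
        refine (integral_biUnion_finset F (fun n _ => measurableSet_Ioc) ?_
          (fun n _ => hρint.integrableOn)).symm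
        intro m hm n hn hmn
        simp only [Function.onFun, hI]
        have key : ∀ p q : ℤ, p < q →
            (p : ℝ) / lam - t ≤ (q : ℝ) / lam - t - 1 / lam := by
          intro p q hpq
          have h1 : ((p : ℝ) + 1) / lam ≤ (q : ℝ) / lam := by
            have h0 : ((p : ℝ) + 1) ≤ (q : ℝ) := by exact_mod_cast hpq
            exact div_le_div_of_nonneg_right h0 hlam.le
          rw [add_div] at h1
          linarith
        rw [Set.Ioc_disjoint_Ioc]
        rcases lt_or_gt_of_ne hmn with h | h
        · exact le_trans (min_le_left _ _) (le_trans (key m n h) (le_max_right _ _))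
        · exact le_trans (min_le_right _ _) (le_trans (key n m h) (le_max_left _ _))
    _ ≤ ∫ s in Set.Ioi (T - 1 / lam), ρ s := by
        apply setIntegral_mono_set hρint.integrableOn
          (Filter.Eventually.of_forall fun s => hρ0 s)
        apply HasSubset.Subset.eventuallyLE
        exact Set.iUnion₂_subset hIsub

private lemma rho_le_zero {ρ : ℝ → ℝ} (hρeven : ∀ s, ρ (-s) = ρ s)
    (hρmono : AntitoneOn ρ (Set.Ici 0)) (u : ℝ) : ρ u ≤ ρ 0 := by
  rcases le_or_gt 0 u with h | h
  · exact hρmono (Set.self_mem_Ici) h h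
  · rw [← hρeven u]
    exact hρmono (Set.self_mem_Ici) (by simp; linarith) (by linarith)

private lemma summable_nat_side {lam T : ℝ} {ρ : ℝ → ℝ} (hlam : 0 < lam)
    (hρ0 : ∀ s, 0 ≤ ρ s) (hρeven : ∀ s, ρ (-s) = ρ s) (hρint : Integrable ρ)
    (hρmono : AntitoneOn ρ (Set.Ici 0)) (hT : 1 / lam ≤ T) (t : ℝ) :
    Summable (fun i : ℕ => ρ (t - (i : ℝ) / lam)) := by
  classical
  set N₀ : ℕ := ⌈lam * (t + T)⌉₊ with hN₀
  apply summable_of_sum_range_le (c := (N₀ + 1) * ρ 0 + lam * ∫ s in Set.Ioi (T - 1/lam), ρ s)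
    (fun i => hρ0 _)
  intro N
  rw [← Finset.sum_filter_add_sum_filter_not (Finset.range N) (· ≤ N₀)]
  have h1 : ∑ i ∈ (Finset.range N).filter (· ≤ N₀), ρ (t - (i:ℝ)/lam) ≤ (N₀ + 1) * ρ 0 := by
    calc ∑ i ∈ (Finset.range N).filter (· ≤ N₀), ρ (t - (i:ℝ)/lam)
        ≤ ∑ _i ∈ (Finset.range N).filter (· ≤ N₀), ρ 0 :=
          Finset.sum_le_sum fun i _ => rho_le_zero hρeven hρmono _
      _ = ((Finset.range N).filter (· ≤ N₀)).card * ρ 0 := by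
          rw [Finset.sum_const, nsmul_eq_mul]
      _ ≤ (N₀ + 1) * ρ 0 := by
          apply mul_le_mul_of_nonneg_right _ (hρ0 0)
          have hsub : (Finset.range N).filter (· ≤ N₀) ⊆ Finset.range (N₀ + 1) := by
            intro i hi
            simp only [Finset.mem_filter] at hi
            exact Finset.mem_range.2 (Nat.lt_succ_of_le hi.2)
          have := Finset.card_le_card hsub
          rw [Finset.card_range] at this
          exact_mod_cast this
  have h2 : ∑ i ∈ (Finset.range N).filter (¬ · ≤ N₀), ρ (t - (i:ℝ)/lam)
      ≤ lam * ∫ s in Set.Ioi (T - 1/lam), ρ s := by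
    set F : Finset ℤ := ((Finset.range N).filter (¬ · ≤ N₀)).image (fun i : ℕ => (i : ℤ)) with hF
    have hFmem : ∀ n ∈ F, T ≤ (n : ℝ) / lam - t := by
      intro n hn
      simp only [hF, Finset.mem_image, Finset.mem_filter] at hn
      obtain ⟨i, ⟨_, hi⟩, rfl⟩ := hn
      push_neg at hi
      have : lam * (t + T) ≤ (N₀ : ℝ) := Nat.le_ceil _
      have hiN : (N₀ : ℝ) + 1 ≤ (i : ℝ) := by exact_mod_cast hi
      have : lam * (t + T) < (i : ℝ) := by linarith
      have h3 : t + T ≤ (i : ℝ) / lam := by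
        rw [le_div_iff₀ hlam]; linarith [mul_comm lam (t+T)]
      push_cast
      linarith
    have := oneSide hlam hρ0 hρint hρmono hT t F hFmem
    have heq : ∑ n ∈ F, (1/lam) * ρ ((n : ℝ)/lam - t)
        = ∑ i ∈ (Finset.range N).filter (¬ · ≤ N₀), (1/lam) * ρ (t - (i:ℝ)/lam) := by
      rw [hF, Finset.sum_image (by intro a _ b _ h; exact Nat.cast_injective h)]
      apply Finset.sum_congr rfl
      intro i _
      rw [show ((i:ℤ):ℝ) = (i:ℝ) by push_cast; ring, ← hρeven (t - (i:ℝ)/lam)]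
      ring_nf
    rw [heq] at this
    calc ∑ i ∈ (Finset.range N).filter (¬ · ≤ N₀), ρ (t - (i:ℝ)/lam)
        = lam * ∑ i ∈ (Finset.range N).filter (¬ · ≤ N₀), (1/lam) * ρ (t - (i:ℝ)/lam) := by
          rw [Finset.mul_sum]
          apply Finset.sum_congr rfl
          intro i _
          field_simp
      _ ≤ lam * ∫ s in Set.Ioi (T - 1/lam), ρ s := by
          exact mul_le_mul_of_nonneg_left this hlam.le
  linarith

private lemma summable_int_rho {lam T : ℝ} {ρ : ℝ → ℝ} (hlam : 0 < lam)
    (hρ0 : ∀ s, 0 ≤ ρ s) (hρeven : ∀ s, ρ (-s) = ρ s) (hρint : Integrable ρ)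
    (hρmono : AntitoneOn ρ (Set.Ici 0)) (hT : 1 / lam ≤ T) (t : ℝ) :
    Summable (fun n : ℤ => ρ (t - (n : ℝ) / lam)) := by
  rw [summable_int_iff_summable_nat_and_neg]
  constructor
  · exact (summable_nat_side hlam hρ0 hρeven hρint hρmono hT t).congr
      (by intro i; norm_num)
  · have := summable_nat_side hlam hρ0 hρeven hρint hρmono hT (-t)
    apply this.congr
    intro i
    rw [← hρeven (-t - (i:ℝ)/lam)]
    push_cast
    ring_nf

private lemma tail_tsum_le {lam T a ε₂ : ℝ} {ρ : ℝ → ℝ} (hlam : 0 < lam)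
    (hρ0 : ∀ s, 0 ≤ ρ s) (hρeven : ∀ s, ρ (-s) = ρ s) (hρint : Integrable ρ)
    (hρmono : AntitoneOn ρ (Set.Ici 0)) (hT : 1 / lam ≤ T)
    (hTtail : ∫ s in Set.Ioi (T - 1 / lam), ρ s ≤ ε₂)
    {t : ℝ} (ht : t ∈ Set.Icc (-a) a) :
    ∑' n : ↥(padSet lam a T)ᶜ, (1 / lam) * ρ (t - ((n : ℤ) : ℝ) / lam) ≤ 2 * ε₂ := by
  classical
  apply Summable.tsum_le_of_sum_le
    (((summable_int_rho hlam hρ0 hρeven hρint hρmono hT t).mul_left (1/lam)).subtype _)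
  intro F
  simp only [Function.comp_apply]
  set P : ↥(padSet lam a T)ᶜ → Prop := fun n => a + T < ((n : ℤ) : ℝ) / lam with hP
  rw [← Finset.sum_filter_add_sum_filter_not F P]
  have hnotmem : ∀ n : ↥(padSet lam a T)ᶜ,
      ((n:ℤ):ℝ)/lam < -(a+T) ∨ a + T < ((n:ℤ):ℝ)/lam := by
    intro n
    have := n.2
    simp only [Set.mem_compl_iff, padSet, Set.mem_setOf_eq, Set.mem_Icc, not_and_or,
      not_le] at this
    tauto
  have hbound1 : ∑ n ∈ F.filter P, (1/lam) * ρ (t - ((n:ℤ):ℝ)/lam) ≤ ε₂ := by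
    set G : Finset ℤ := (F.filter P).image (fun n : ↥(padSet lam a T)ᶜ => (n : ℤ)) with hG
    have hmem : ∀ m ∈ G, T ≤ (m : ℝ)/lam - t := by
      intro m hm
      simp only [hG, Finset.mem_image, Finset.mem_filter] at hm
      obtain ⟨n, ⟨_, hn⟩, rfl⟩ := hm
      have := ht.2
      simp only [hP] at hn
      linarith
    have := oneSide hlam hρ0 hρint hρmono hT t G hmem
    have heq : ∑ m ∈ G, (1/lam) * ρ ((m:ℝ)/lam - t)
        = ∑ n ∈ F.filter P, (1/lam) * ρ (t - ((n:ℤ):ℝ)/lam) := by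
      rw [hG, Finset.sum_image (by intro x _ y _ h; exact Subtype.ext h)]
      apply Finset.sum_congr rfl
      intro n _
      rw [← hρeven (t - ((n:ℤ):ℝ)/lam)]
      ring_nf
    rw [heq] at this
    exact this.trans hTtail
  have hbound2 : ∑ n ∈ F.filter (fun n => ¬ P n), (1/lam) * ρ (t - ((n:ℤ):ℝ)/lam) ≤ ε₂ := by
    set G : Finset ℤ := (F.filter (fun n => ¬ P n)).image (fun n : ↥(padSet lam a T)ᶜ => -(n : ℤ)) with hG
    have hmem : ∀ m ∈ G, T ≤ (m : ℝ)/lam - (-t) := by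
      intro m hm
      simp only [hG, Finset.mem_image, Finset.mem_filter] at hm
      obtain ⟨n, ⟨_, hn⟩, rfl⟩ := hm
      simp only [hP] at hn
      rcases hnotmem n with h | h
      · have := ht.1
        push_cast
        have hnd : -(((n:ℤ):ℝ)) / lam = -((((n:ℤ):ℝ)) / lam) := neg_div _ _
        linarith
      · exact absurd h hn
    have := oneSide hlam hρ0 hρint hρmono hT (-t) G hmem
    have heq : ∑ m ∈ G, (1/lam) * ρ ((m:ℝ)/lam - (-t))
        = ∑ n ∈ F.filter (fun n => ¬ P n), (1/lam) * ρ (t - ((n:ℤ):ℝ)/lam) := by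
      rw [hG, Finset.sum_image (by intro x _ y _ h; exact Subtype.ext (neg_injective h))]
      apply Finset.sum_congr rfl
      intro n _
      push_cast
      ring_nf
    rw [heq] at this
    exact this.trans hTtail
  linarith

theorem stmt10 (K : ℕ) (hK : 1 ≤ K) (μ : ℝ) (hμ0 : 0 < μ) (hμ1 : μ < 1)
    (lam : ℝ) (hlam : 1 < lam) (ε₁ ε₂ : ℝ) (hε₁ : 0 ≤ ε₁) (hε₂ : 0 ≤ ε₂)
    (φ : SchwartzMap ℝ ℝ)
    (ρ : ℝ → ℝ) (hρ0 : ∀ s, 0 ≤ ρ s) (hρeven : ∀ s, ρ (-s) = ρ s)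
    (hρint : Integrable ρ) (hρmono : AntitoneOn ρ (Set.Ici 0))
    (hdom : ∀ t, |φ t| ≤ ρ t)
    -- (i) every bandlimited signal admits a full quantized reconstruction with error `ε₁`
    (happrox : ∀ x : ℝ → ℝ, IsBandlimited μ x → ∃ q : ℤ → ℝ,
      (∀ n, q n ∈ alphabet K) ∧
      ∀ t : ℝ, |x t - (1 / lam) * ∑' n : ℤ, q n * φ (t - (n : ℝ) / lam)| ≤ ε₁)
    -- (ii) the calibration time `T` controls the tail of the envelope `ρ`
    (T : ℝ) (hT : 1 / lam ≤ T) (hTtail : ∫ s in Set.Ioi (T - 1 / lam), ρ s ≤ ε₂)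
    (a : ℝ) (ha : 0 < a) :
    -- every bandlimited signal admits a truncated quantized reconstruction, supported on
    -- `ℤ ∩ λĨ`, with error `ε₁ + 2ε₂` uniformly on `I = [-a, a]`
    (∀ x : ℝ → ℝ, IsBandlimited μ x → ∃ q : ℤ → ℝ,
      (∀ n ∈ padSet lam a T, q n ∈ alphabet K) ∧
      (∀ n ∉ padSet lam a T, q n = 0) ∧
      ∀ t ∈ Set.Icc (-a) a,
        |x t - (1 / lam) * ∑' n : padSet lam a T, q n * φ (t - (n : ℤ) / lam)|
          ≤ ε₁ + 2 * ε₂) ∧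
    -- in particular the set of truncated reconstructions is finite with at most
    -- `2 ^ (K · #(ℤ ∩ λĨ))` elements (and, by the first part, it is an
    -- `(ε₁ + 2ε₂)`-net of `B₁(ℝ, μ)` in the supremum norm on `I`)
    (padSet lam a T).Finite ∧
    (truncRecons K (fun t => φ t) lam a T).Finite ∧
    Nat.card (truncRecons K (fun t => φ t) lam a T) ≤ 2 ^ (K * Nat.card (padSet lam a T)) ∧
    (∀ x : ℝ → ℝ, IsBandlimited μ x → ∃ f ∈ truncRecons K (fun t => φ t) lam a T,
      ∀ t ∈ Set.Icc (-a) a, |x t - f t| ≤ ε₁ + 2 * ε₂) := by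
  classical
  have hlam0 : (0:ℝ) < lam := lt_trans one_pos hlam
  -- main approximation part
  have main : ∀ x : ℝ → ℝ, IsBandlimited μ x → ∃ q : ℤ → ℝ,
      (∀ n ∈ padSet lam a T, q n ∈ alphabet K) ∧
      (∀ n ∉ padSet lam a T, q n = 0) ∧
      ∀ t ∈ Set.Icc (-a) a,
        |x t - (1 / lam) * ∑' n : padSet lam a T, q n * φ (t - (n : ℤ) / lam)|
          ≤ ε₁ + 2 * ε₂ := by
    intro x hx
    obtain ⟨q₀, hq₀A, hq₀e⟩ := happrox x hx
    refine ⟨fun n => if n ∈ padSet lam a T then q₀ n else 0,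
      fun n hn => by simp only [if_pos hn]; exact hq₀A n,
      fun n hn => by simp only [if_neg hn], ?_⟩
    intro t ht
    have hρsum := summable_int_rho hlam0 hρ0 hρeven hρint hρmono hT t
    have hsum : Summable (fun n : ℤ => q₀ n * φ (t - (n : ℝ) / lam)) := by
      apply Summable.of_norm_bounded hρsum
      intro n
      rw [Real.norm_eq_abs, abs_mul]
      calc |q₀ n| * |φ (t - (n:ℝ)/lam)| ≤ 1 * ρ (t - (n:ℝ)/lam) :=
            mul_le_mul (alphabet_abs_le' hK (hq₀A n)) (hdom _) (abs_nonneg _) zero_le_one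
        _ = ρ (t - (n:ℝ)/lam) := one_mul _
    have hsplit := Summable.tsum_subtype_add_tsum_subtype_compl hsum (padSet lam a T)
    set A := ∑' n : padSet lam a T, q₀ (n : ℤ) * φ (t - ((n : ℤ) : ℝ) / lam) with hA
    set B := ∑' n : ↥(padSet lam a T)ᶜ, q₀ (n : ℤ) * φ (t - ((n : ℤ) : ℝ) / lam) with hB
    have hq' : ∑' n : padSet lam a T,
        (if (n : ℤ) ∈ padSet lam a T then q₀ (n : ℤ) else 0) * φ (t - ((n : ℤ) : ℝ) / lam)
        = A := tsum_congr fun n => by rw [if_pos n.2]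
    rw [hq']
    have h0 := hq₀e t
    rw [← hsplit] at h0
    have hBabs : |B| ≤ ∑' n : ↥(padSet lam a T)ᶜ, ρ (t - ((n : ℤ) : ℝ) / lam) := by
      have hsub : Summable (fun n : ↥(padSet lam a T)ᶜ =>
          ‖q₀ (n : ℤ) * φ (t - ((n : ℤ) : ℝ) / lam)‖) :=
        (summable_norm_iff.2 hsum).subtype _
      calc |B| ≤ ∑' n : ↥(padSet lam a T)ᶜ, ‖q₀ (n : ℤ) * φ (t - ((n : ℤ) : ℝ) / lam)‖ := by
            rw [hB, ← Real.norm_eq_abs]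
            exact norm_tsum_le_tsum_norm hsub
        _ ≤ _ := by
            apply Summable.tsum_le_tsum _ hsub (hρsum.subtype _)
            intro n
            rw [Real.norm_eq_abs, abs_mul]
            calc |q₀ (n:ℤ)| * |φ (t - ((n:ℤ):ℝ)/lam)| ≤ 1 * ρ (t - ((n:ℤ):ℝ)/lam) :=
                  mul_le_mul (alphabet_abs_le' hK (hq₀A _)) (hdom _) (abs_nonneg _) zero_le_one
              _ = _ := one_mul _
    have htail : (1 / lam) * ∑' n : ↥(padSet lam a T)ᶜ, ρ (t - ((n : ℤ) : ℝ) / lam)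
        ≤ 2 * ε₂ := by
      have := tail_tsum_le hlam0 hρ0 hρeven hρint hρmono hT hTtail ht
      rwa [tsum_mul_left] at this
    have hpos : 0 < 1 / lam := by positivity
    calc |x t - 1 / lam * A| = |(x t - 1 / lam * (A + B)) + 1 / lam * B| := by ring_nf
      _ ≤ |x t - 1 / lam * (A + B)| + |1 / lam * B| := abs_add_le _ _
      _ ≤ ε₁ + 1 / lam * |B| := by
          rw [abs_mul, abs_of_pos hpos]
          exact add_le_add h0 le_rfl
      _ ≤ ε₁ + 2 * ε₂ := by
          have h1 : 1 / lam * |B| ≤ (1/lam) * ∑' n : ↥(padSet lam a T)ᶜ,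
              ρ (t - ((n : ℤ) : ℝ) / lam) := mul_le_mul_of_nonneg_left hBabs hpos.le
          linarith
  -- finiteness of the pad set
  have hfin : (padSet lam a T).Finite := by
    apply Set.Finite.subset (Set.finite_Icc (-(⌈lam * (a + T)⌉)) ⌈lam * (a + T)⌉)
    intro n hn
    simp only [padSet, Set.mem_setOf_eq, Set.mem_Icc] at hn
    have h1 : (n : ℝ) ≤ (a + T) * lam := (div_le_iff₀ hlam0).1 hn.2
    have h2 : -(a + T) * lam ≤ (n : ℝ) := (le_div_iff₀ hlam0).1 hn.1
    have hceil : lam * (a + T) ≤ (⌈lam * (a + T)⌉ : ℝ) := Int.le_ceil _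
    constructor
    · have : (((-⌈lam * (a + T)⌉) : ℤ) : ℝ) ≤ (n : ℝ) := by push_cast; nlinarith
      exact_mod_cast this
    · have : (n : ℝ) ≤ ((⌈lam * (a + T)⌉ : ℤ) : ℝ) := by nlinarith
      exact_mod_cast this
  haveI : Finite ↥(padSet lam a T) := hfin.to_subtype
  -- alphabet is finite
  have halphrange : alphabet K = Set.range (fun i : Fin (2 ^ K) => -1 + 2 * (i : ℝ) / (2 ^ K - 1)) := by
    ext q
    simp only [alphabet, Set.mem_setOf_eq, Set.mem_range, eq_comm]
  have halphfin : (alphabet K).Finite := by rw [halphrange]; exact Set.finite_range _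
  haveI : Finite ↥(alphabet K) := halphfin.to_subtype
  -- truncRecons as a range
  set Φ : (↥(padSet lam a T) → ↥(alphabet K)) → (ℝ → ℝ) :=
    fun g t => (1 / lam) * ∑' n : padSet lam a T, (g n : ℝ) * φ (t - ((n : ℤ) : ℝ) / lam) with hΦ
  have hrange : truncRecons K (fun t => φ t) lam a T = Set.range Φ := by
    ext f
    constructor
    · rintro ⟨q, hqA, hq0, rfl⟩
      exact ⟨fun n => ⟨q n, hqA n n.2⟩, rfl⟩
    · rintro ⟨g, rfl⟩
      refine ⟨fun n => if h : n ∈ padSet lam a T then (g ⟨n, h⟩ : ℝ) else 0,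
        fun n hn => by simp only [dif_pos hn]; exact (g ⟨n, hn⟩).2,
        fun n hn => by simp only [dif_neg hn], ?_⟩
      funext t
      simp only [hΦ]
      congr 1
      apply tsum_congr
      intro n
      rw [dif_pos n.2]
  have htrfin : (truncRecons K (fun t => φ t) lam a T).Finite := by
    rw [hrange]; exact Set.finite_range Φ
  have hcard : Nat.card (truncRecons K (fun t => φ t) lam a T)
      ≤ 2 ^ (K * Nat.card (padSet lam a T)) := by
    have h1 : Nat.card ↥(alphabet K) ≤ 2 ^ K := by
      rw [halphrange]
      calc Nat.card ↥(Set.range (fun i : Fin (2 ^ K) => -1 + 2 * (i : ℝ) / (2 ^ K - 1)))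
          ≤ Nat.card (Fin (2 ^ K)) := Finite.card_range_le _
        _ = 2 ^ K := by simp
    calc Nat.card (truncRecons K (fun t => φ t) lam a T)
        ≤ Nat.card (↥(padSet lam a T) → ↥(alphabet K)) := by
          rw [hrange]; exact Finite.card_range_le Φ
      _ = Nat.card ↥(alphabet K) ^ Nat.card ↥(padSet lam a T) := Nat.card_fun
      _ ≤ (2 ^ K) ^ Nat.card ↥(padSet lam a T) := Nat.pow_le_pow_left h1 _
      _ = 2 ^ (K * Nat.card (padSet lam a T)) := (pow_mul 2 K _).symm
  refine ⟨main, hfin, htrfin, hcard, ?_⟩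
  intro x hx
  obtain ⟨q, hqA, hq0, hqe⟩ := main x hx
  exact ⟨fun t => (1 / lam) * ∑' n : padSet lam a T, q n * φ (t - ((n : ℤ) : ℝ) / lam),
    ⟨q, hqA, hq0, rfl⟩, hqe⟩
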